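/- Let A be an n×m real matrix with no zero rows and no zero columns, and let w ∈ ℝⁿ and v ∈ ℝ^m have strictly positive entries. Then there exist sequences of multiplicities k_N : Fin n → ℕ₊ and l_N : Fin m → ℕ₊ (N ∈ ℕ) such that, denoting by A'_N the split matrix of A with multiplicities k_N and l_N and by n'_N, m'_N its numbers of rows and columns, the sequence √(n'_N·m'_N)·‖A'_N‖ converges to ‖Ã‖·‖w‖·‖v‖ as N → ∞, where Ã is the n×m matrix with entries ã_{ij} = a_{ij}/(w_i·v_j) and ‖·‖ is the ℓ²→ℓ² operator norm. -/

import Mathlib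

open scoped BigOperators

/-- The ℓ²→ℓ² operator norm of a real matrix. -/
noncomputable def l2OpNorm {α β : Type*} [Fintype α] [Fintype β] [DecidableEq β]
    (A : Matrix α β ℝ) : ℝ :=
  ‖LinearMap.toContinuousLinearMap (Matrix.toEuclideanLin A)‖

/-- The ∞→1 norm of a real matrix: `max_{x ∈ {-1,1}ⁿ, y ∈ {-1,1}^m} xᵀ A y`. -/
noncomputable def normInftyOne {α β : Type*} [Fintype α] [Fintype β] (A : Matrix α β ℝ) : ℝ :=
  ⨆ p : (α → Bool) × (β → Bool),
    ∑ i, ∑ j, (if p.1 i then (1:ℝ) else -1) * A i j * (if p.2 j then (1:ℝ) else -1)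

/-- The Grothendieck norm: sup over `k` and families of unit vectors of `Σ a_{ij} ⟨p_i, q_j⟩`. -/
noncomputable def grothendieckNorm {α β : Type*} [Fintype α] [Fintype β]
    (A : Matrix α β ℝ) : ℝ :=
  sSup { r : ℝ | ∃ (k : ℕ) (p : α → EuclideanSpace ℝ (Fin k)) (q : β → EuclideanSpace ℝ (Fin k)),
    (∀ i, ‖p i‖ = 1) ∧ (∀ j, ‖q j‖ = 1) ∧
    r = ∑ i, ∑ j, A i j * (inner ℝ (p i) (q j) : ℝ) }

/-- The matrix obtained from `A` by splitting row `i` into `k i` equal rows and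
column `j` into `l j` equal columns. -/
noncomputable def splitMatrix {n m : ℕ} (A : Matrix (Fin n) (Fin m) ℝ)
    (k : Fin n → ℕ+) (l : Fin m → ℕ+) :
    Matrix ((i : Fin n) × Fin (k i : ℕ)) ((j : Fin m) × Fin (l j : ℕ)) ℝ :=
  fun p q => A p.1 q.1 / (((k p.1 : ℕ) : ℝ) * ((l q.1 : ℕ) : ℝ))

/-!
Splitting row `i` into `k i` copies and column `j` into `l j` copies factors the split matrix as
`E_k D E_lᴴ`, where `E_k, E_l` are isometries and `D = diag(k)^(-1/2) A diag(l)^(-1/2)`; hence it has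
the operator norm of `D`. With `k i ≈ N w_i²` and `l j ≈ N v_j²`, the matrix
`√(Σ k · Σ l) D = diag(√(Σ k) / √k) A diag(√(Σ l) / √l)` tends to
`diag(‖w‖ / w) A diag(‖v‖ / v) = ‖w‖ ‖v‖ Ã`, and the operator norm is continuous.
-/

open Filter Topology Matrix
open scoped Matrix.Norms.L2Operator

namespace Matrix

variable {𝕜 : Type*} [RCLike 𝕜] {m n p q : Type*} [Fintype m] [Fintype n] [Fintype p]
  [Fintype q]

theorem l2_opNorm_le_one_of_conjTranspose_mul_self_eq_one [DecidableEq n] {U : Matrix m n 𝕜}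
    (hU : Uᴴ * U = 1) : ‖U‖ ≤ 1 := by
  have h : ‖U‖ * ‖U‖ ≤ 1 := by
    rw [← l2_opNorm_conjTranspose_mul_self, hU, ← diagonal_one, l2_opNorm_diagonal]
    exact pi_norm_le_iff_of_nonneg zero_le_one |>.2 fun _ => by simp
  nlinarith [norm_nonneg U]

theorem l2_opNorm_mul_mul_conjTranspose [DecidableEq m] [DecidableEq n] [DecidableEq p]
    [DecidableEq q] {U : Matrix m n 𝕜} {V : Matrix p q 𝕜} (hU : Uᴴ * U = 1) (hV : Vᴴ * V = 1)
    (B : Matrix n q 𝕜) : ‖U * B * Vᴴ‖ = ‖B‖ := by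
  have hU1 := l2_opNorm_le_one_of_conjTranspose_mul_self_eq_one hU
  have hV1 := l2_opNorm_le_one_of_conjTranspose_mul_self_eq_one hV
  have hB : B = Uᴴ * (U * B * Vᴴ) * V := by
    simp only [Matrix.mul_assoc, hV, Matrix.mul_one, ← Matrix.mul_assoc Uᴴ, hU, Matrix.one_mul]
  apply le_antisymm
  · calc ‖U * B * Vᴴ‖ ≤ ‖U‖ * ‖B‖ * ‖Vᴴ‖ :=
          (l2_opNorm_mul _ _).trans (by gcongr; exact l2_opNorm_mul _ _)
      _ ≤ 1 * ‖B‖ * 1 := by rw [l2_opNorm_conjTranspose]; gcongr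
      _ = ‖B‖ := by ring
  · calc ‖B‖ ≤ ‖Uᴴ‖ * ‖U * B * Vᴴ‖ * ‖V‖ := by
          conv_lhs => rw [hB]
          exact (l2_opNorm_mul _ _).trans (by gcongr; exact l2_opNorm_mul _ _)
      _ ≤ 1 * ‖U * B * Vᴴ‖ * 1 := by rw [l2_opNorm_conjTranspose]; gcongr
      _ = ‖U * B * Vᴴ‖ := by ring

end Matrix

noncomputable def splitIsometry {ι : Type*} [DecidableEq ι] (c : ι → ℕ+) :
    Matrix ((i : ι) × Fin (c i : ℕ)) ι ℝ :=
  fun p i => if p.1 = i then (√((c i : ℕ) : ℝ))⁻¹ else 0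

theorem splitIsometry_conjTranspose_mul_self {ι : Type*} [Fintype ι] [DecidableEq ι]
    (c : ι → ℕ+) : (splitIsometry c)ᴴ * splitIsometry c = 1 := by
  ext i j
  simp only [mul_apply, conjTranspose_apply, star_trivial, splitIsometry, ← Finset.univ_sigma_univ,
    Finset.sum_sigma, ite_mul, zero_mul, mul_ite, mul_zero]
  by_cases hij : i = j
  · subst hij
    have hc : (0 : ℝ) < (c i : ℕ) := by exact_mod_cast (c i).pos
    simp [← sq, Real.sq_sqrt hc.le, hc.ne']
  · simp [hij, Ne.symm hij]

theorem splitMatrix_eq {n m : ℕ} (A : Matrix (Fin n) (Fin m) ℝ) (k : Fin n → ℕ+)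
    (l : Fin m → ℕ+) :
    splitMatrix A k l = splitIsometry k *
      (diagonal (fun i => (√((k i : ℕ) : ℝ))⁻¹) * A * diagonal (fun j => (√((l j : ℕ) : ℝ))⁻¹)) *
      (splitIsometry l)ᴴ := by
  set D := diagonal (fun i => (√((k i : ℕ) : ℝ))⁻¹) * A * diagonal (fun j => (√((l j : ℕ) : ℝ))⁻¹)
  have hD : ∀ i j, D i j = (√((k i : ℕ) : ℝ))⁻¹ * A i j * (√((l j : ℕ) : ℝ))⁻¹ := by
    simp [D, diagonal_mul, mul_diagonal]
  ext p q
  have hk : (0 : ℝ) < (k p.1 : ℕ) := by positivity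
  have hl : (0 : ℝ) < (l q.1 : ℕ) := by positivity
  simp only [mul_apply, conjTranspose_apply, star_trivial, splitIsometry, ite_mul, zero_mul,
    mul_ite, mul_zero, Finset.sum_ite_eq, Finset.mem_univ, if_true, splitMatrix, hD]
  field_simp
  rw [Real.sq_sqrt hk.le, Real.sq_sqrt hl.le]

theorem l2OpNorm_splitMatrix {n m : ℕ} (A : Matrix (Fin n) (Fin m) ℝ) (k : Fin n → ℕ+)
    (l : Fin m → ℕ+) :
    l2OpNorm (splitMatrix A k l) =
      ‖diagonal (fun i => (√((k i : ℕ) : ℝ))⁻¹) * A * diagonal (fun j => (√((l j : ℕ) : ℝ))⁻¹)‖ := by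
  rw [splitMatrix_eq]
  exact l2_opNorm_mul_mul_conjTranspose (splitIsometry_conjTranspose_mul_self k)
    (splitIsometry_conjTranspose_mul_self l) _

theorem norm_diagonal_smul_mul_mul_diagonal_smul {m n : Type*} [Fintype m] [Fintype n]
    [DecidableEq m] [DecidableEq n] {s t : ℝ} (hs : 0 ≤ s) (ht : 0 ≤ t) (a : m → ℝ)
    (A : Matrix m n ℝ) (b : n → ℝ) :
    ‖diagonal (s • a) * A * diagonal (t • b)‖ = s * t * ‖diagonal a * A * diagonal b‖ := by
  rw [diagonal_smul, diagonal_smul, Matrix.smul_mul, Matrix.mul_smul, Matrix.smul_mul, smul_smul,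
    norm_smul, Real.norm_of_nonneg (by positivity), mul_comm t]

theorem tendsto_norm_diagonal_mul_mul_diagonal {𝕜 : Type*} [RCLike 𝕜] {m n α : Type*}
    [Fintype m] [Fintype n] [DecidableEq m] [DecidableEq n] {f : Filter α} {a : α → m → 𝕜}
    {b : α → n → 𝕜} {a₀ : m → 𝕜} {b₀ : n → 𝕜} (ha : Tendsto a f (𝓝 a₀))
    (hb : Tendsto b f (𝓝 b₀)) (A : Matrix m n 𝕜) :
    Tendsto (fun x => ‖diagonal (a x) * A * diagonal (b x)‖) f
      (𝓝 ‖diagonal a₀ * A * diagonal b₀‖) := by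
  have hcont : Continuous fun p : (m → 𝕜) × (n → 𝕜) => diagonal p.1 * A * diagonal p.2 :=
    (continuous_fst.matrix_diagonal.matrix_mul continuous_const).matrix_mul
      continuous_snd.matrix_diagonal
  exact ((hcont.tendsto _).comp (ha.prodMk_nhds hb)).norm

theorem tendsto_succPNat_ceil_mul_div {a : ℝ} (ha : 0 ≤ a) :
    Tendsto (fun N : ℕ => ((Nat.succPNat ⌈a * N⌉₊ : ℕ) : ℝ) / N) atTop (𝓝 a) := by
  have h := ((tendsto_nat_ceil_mul_div_atTop ha).comp tendsto_natCast_atTop_atTop).add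
    tendsto_one_div_atTop_nhds_zero_nat
  rw [add_zero] at h
  refine h.congr fun N => ?_
  simp [add_div]

theorem tendsto_sqrt_sum_smul_inv_sqrt {ι : Type*} [Fintype ι] {c : ℕ → ι → ℝ} {w : ι → ℝ}
    (hc : ∀ i, Tendsto (fun N => c N i / N) atTop (𝓝 (w i ^ 2))) (hw : ∀ i, 0 < w i) :
    Tendsto (fun N => √(∑ j, c N j) • fun i => (√(c N i))⁻¹) atTop
      (𝓝 (√(∑ j, w j ^ 2) • w⁻¹)) := by
  have hsum : Tendsto (fun N => (∑ j, c N j) / N) atTop (𝓝 (∑ j, w j ^ 2)) := by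
    simpa only [Finset.sum_div] using tendsto_finsetSum _ fun j _ => hc j
  refine tendsto_pi_nhds.2 fun i => ?_
  simp only [Pi.smul_apply, Pi.inv_apply, smul_eq_mul, ← div_eq_mul_inv]
  have h := hsum.sqrt.div (hc i).sqrt (by rw [Real.sqrt_sq (hw i).le]; exact (hw i).ne')
  rw [Real.sqrt_sq (hw i).le] at h
  refine h.congr' ?_
  filter_upwards [eventually_gt_atTop 0] with N hN
  rw [Pi.div_apply, Real.sqrt_div' _ (Nat.cast_nonneg N), Real.sqrt_div' _ (Nat.cast_nonneg N),
    div_div_div_cancel_right₀ (by positivity)]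

theorem splitting_approximates_weights_general (n m : ℕ) (A : Matrix (Fin n) (Fin m) ℝ)
    (w : Fin n → ℝ) (v : Fin m → ℝ)
    (hw : ∀ i, 0 < w i) (hv : ∀ j, 0 < v j)
    (Atil : Matrix (Fin n) (Fin m) ℝ)
    (hAtil : ∀ i j, Atil i j = A i j / (w i * v j)) :
    ∃ (k : ℕ → Fin n → ℕ+) (l : ℕ → Fin m → ℕ+),
      Filter.Tendsto
        (fun N => Real.sqrt ((∑ i, ((k N i : ℕ) : ℝ)) * (∑ j, ((l N j : ℕ) : ℝ))) *
          l2OpNorm (splitMatrix A (k N) (l N)))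
        Filter.atTop
        (nhds (l2OpNorm Atil * Real.sqrt (∑ i, w i ^ 2) * Real.sqrt (∑ j, v j ^ 2))) := by
  let k : ℕ → Fin n → ℕ+ := fun N i => Nat.succPNat ⌈w i ^ 2 * N⌉₊
  let l : ℕ → Fin m → ℕ+ := fun N j => Nat.succPNat ⌈v j ^ 2 * N⌉₊
  refine ⟨k, l, ?_⟩
  have hAtil_eq : Atil = diagonal w⁻¹ * A * diagonal v⁻¹ := by
    ext i j
    simp only [hAtil, div_eq_mul_inv, _root_.mul_inv_rev, mul_diagonal, diagonal_mul, Pi.inv_apply]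
    ring
  have hk := tendsto_sqrt_sum_smul_inv_sqrt (c := fun N i => ((k N i : ℕ) : ℝ))
    (fun i => tendsto_succPNat_ceil_mul_div (sq_nonneg (w i))) hw
  have hl := tendsto_sqrt_sum_smul_inv_sqrt (c := fun N j => ((l N j : ℕ) : ℝ))
    (fun j => tendsto_succPNat_ceil_mul_div (sq_nonneg (v j))) hv
  have hnorm := tendsto_norm_diagonal_mul_mul_diagonal hk hl A
  simp only [norm_diagonal_smul_mul_mul_diagonal_smul, Real.sqrt_nonneg, ← hAtil_eq] at hnorm
  convert hnorm using 2 with N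
  · rw [l2OpNorm_splitMatrix, Real.sqrt_mul (Finset.sum_nonneg fun i _ => by positivity)]
  · exact mul_rotate _ _ _

/-- For arbitrary positive weights `w, v` there are sequences of splittings
`A'_N` with `√(n'_N·m'_N)·‖A'_N‖ → ‖Ã‖·‖w‖·‖v‖`, where `ã_{ij} = a_{ij}/(w_i·v_j)`. -/
theorem splitting_approximates_weights (n m : ℕ) (A : Matrix (Fin n) (Fin m) ℝ)
    (hrow : ∀ i, ∃ j, A i j ≠ 0) (hcol : ∀ j, ∃ i, A i j ≠ 0)
    (w : Fin n → ℝ) (v : Fin m → ℝ)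
    (hw : ∀ i, 0 < w i) (hv : ∀ j, 0 < v j)
    (Atil : Matrix (Fin n) (Fin m) ℝ)
    (hAtil : ∀ i j, Atil i j = A i j / (w i * v j)) :
    ∃ (k : ℕ → Fin n → ℕ+) (l : ℕ → Fin m → ℕ+),
      Filter.Tendsto
        (fun N => Real.sqrt ((∑ i, ((k N i : ℕ) : ℝ)) * (∑ j, ((l N j : ℕ) : ℝ))) *
          l2OpNorm (splitMatrix A (k N) (l N)))
        Filter.atTop
        (nhds (l2OpNorm Atil * Real.sqrt (∑ i, w i ^ 2) * Real.sqrt (∑ j, v j ^ 2))) :=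
  splitting_approximates_weights_general n m A w v hw hv Atil hAtil
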